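/- arXiv:2301.06121 — 2 statements merged into one kernel-verified Lean document; each statement's English description precedes it below -/
import Mathlib

section
/- Let ψ(s) > 0 for all s and suppose (r,v) is a solution of the shifted particle system dr_i/dt = v_i - v̄, dv_i/dt = (1/N)∑_j ψ(|r_i - r_j|)(v_j - v_i) - (1/N)∑_j ∇V(r_i - r_j) such that for all t ≥ 0 the dissipation vanishes: ∑_{i,j} ψ(|r_i(t) - r_j(t)|)|v_i(t) - v_j(t)|² = 0. Then v is constant with v_i(t) = (1/N)∑_j v_j(0) for all i and t, and ∑_j ∇V(r_i(t) - r_j(t)) = 0 for all i and t ≥ 0. -/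
/-!
Vanishing dissipation forces, by positivity of `ψ`, all velocities to coincide at every time
`t ≥ 0`, which kills the alignment term. What is left of the velocity equation is
`v_i' = -(1/N) ∑_j ∇V(r_i - r_j)`; since `∇V` is odd, these forces cancel in pairs, so the
total momentum is conserved. A common velocity with conserved sum must be the initial mean `v̄`,
so every `v_i` is constant on `[0, ∞)` and its derivative, the total force on particle `i`,
vanishes.
-/

open Finset

section Aggregation

variable {ι E : Type*} [Fintype ι]

theorem eq_of_sum_sum_mul_norm_sub_sq_eq_zero [NormedAddCommGroup E]
    {w : ι → ι → ℝ} (hw : ∀ i j, 0 < w i j) {x : ι → E}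
    (h : ∑ i, ∑ j, w i j * ‖x i - x j‖ ^ 2 = 0) (i j : ι) : x i = x j := by
  have hterm : ∀ i j, 0 ≤ w i j * ‖x i - x j‖ ^ 2 := fun i j => by
    have := hw i j
    positivity
  have hrow := (sum_eq_zero_iff_of_nonneg fun i _ => sum_nonneg fun j _ => hterm i j).mp h i
    (mem_univ i)
  have hij := (sum_eq_zero_iff_of_nonneg fun j _ => hterm i j).mp hrow j (mem_univ j)
  rw [mul_eq_zero, or_iff_right (hw i j).ne', sq_eq_zero_iff, norm_eq_zero,
    sub_eq_zero] at hij
  exact hij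

theorem sum_sum_eq_zero_of_antisymm [AddCommGroup E] [Module ℝ E] {f : ι → ι → E}
    (hf : ∀ i j, f i j = -f j i) : ∑ i, ∑ j, f i j = 0 := by
  have hneg : ∑ i, ∑ j, f i j = -∑ i, ∑ j, f i j := by
    conv_lhs => rw [sum_comm]
    simp only [← sum_neg_distrib, ← hf]
  have htwo : (2 : ℝ) • ∑ i, ∑ j, f i j = 0 := by
    rw [two_smul]
    nth_rewrite 1 [hneg]
    exact neg_add_cancel _
  exact (smul_eq_zero.mp htwo).resolve_left two_ne_zero

theorem inv_card_smul_sum_eq_of_forall_eq [AddCommGroup E] [Module ℝ E] {x : ι → E} {i : ι}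
    (hx : ∀ j, x j = x i) : (Fintype.card ι : ℝ)⁻¹ • ∑ j, x j = x i := by
  have hcard : (Fintype.card ι : ℝ) ≠ 0 := Nat.cast_ne_zero.mpr (Fintype.card_pos_iff.mpr ⟨i⟩).ne'
  rw [sum_congr rfl fun j _ => hx j, sum_const, card_univ, ← Nat.cast_smul_eq_nsmul ℝ,
    smul_smul, inv_mul_cancel₀ hcard, one_smul]

end Aggregation

section ConstantOnIci

variable {E : Type*} [NormedAddCommGroup E] [NormedSpace ℝ E] {f : ℝ → E}

theorem eq_of_hasDerivAt_zero_of_nonneg (hf : ∀ t ≥ (0 : ℝ), HasDerivAt f 0 t) {t : ℝ}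
    (ht : 0 ≤ t) : f t = f 0 :=
  constant_of_has_deriv_right_zero (fun s hs => (hf s hs.1).continuousAt.continuousWithinAt)
    (fun s hs => (hf s hs.1).hasDerivWithinAt) t ⟨ht, le_rfl⟩

theorem HasDerivAt.eq_zero_of_forall_nonneg_eq {c f' : E} {t : ℝ} (hf : HasDerivAt f f' t)
    (hc : ∀ s ≥ (0 : ℝ), f s = c) (ht : 0 ≤ t) : f' = 0 := by
  have hconst : HasDerivWithinAt f 0 (Set.Ici 0) t :=
    (hasDerivWithinAt_const t _ c).congr (fun s hs => hc s hs) (hc t ht)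
  exact (uniqueDiffOn_Ici 0 t ht).eq_deriv _ hf.hasDerivWithinAt hconst

end ConstantOnIci

theorem invariant_set_characterization_general (N d : ℕ)
    (ψ : ℝ → ℝ) (hψ : ∀ s : ℝ, 0 < ψ s)
    (V : EuclideanSpace ℝ (Fin d) → ℝ)
    (hodd : ∀ y : EuclideanSpace ℝ (Fin d), gradient V y = -gradient V (-y))
    (r v : Fin N → ℝ → EuclideanSpace ℝ (Fin d))
    (vbar : EuclideanSpace ℝ (Fin d))
    (hvbar : vbar = (N : ℝ)⁻¹ • ∑ j : Fin N, v j 0)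
    (hv : ∀ i, ∀ t ≥ (0:ℝ), HasDerivAt (v i)
      ((N : ℝ)⁻¹ • ∑ j : Fin N, ψ ‖r i t - r j t‖ • (v j t - v i t)
        - (N : ℝ)⁻¹ • ∑ j : Fin N, gradient V (r i t - r j t)) t)
    (hdiss : ∀ t ≥ (0:ℝ), ∑ i : Fin N, ∑ j : Fin N,
      ψ ‖r i t - r j t‖ * ‖v i t - v j t‖ ^ 2 = 0) :
    ∀ i, ∀ t ≥ (0:ℝ),
      v i t = vbar ∧ ∑ j : Fin N, gradient V (r i t - r j t) = 0 := by
  set F : Fin N → ℝ → EuclideanSpace ℝ (Fin d) := fun i t => ∑ j, gradient V (r i t - r j t)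
  have hsync : ∀ t ≥ (0:ℝ), ∀ i j, v i t = v j t := fun t ht =>
    eq_of_sum_sum_mul_norm_sub_sq_eq_zero (fun _ _ => hψ _) (hdiss t ht)
  have hv' : ∀ i, ∀ t ≥ (0:ℝ), HasDerivAt (v i) (-((N : ℝ)⁻¹ • F i t)) t := fun i t ht => by
    simpa [hsync t ht _ i] using hv i t ht
  have hF : ∀ t, ∑ i, F i t = 0 := fun t =>
    sum_sum_eq_zero_of_antisymm fun i j => by rw [hodd, neg_sub]
  have hmomentum : ∀ t ≥ (0:ℝ), HasDerivAt (fun s => ∑ i, v i s) 0 t := fun t ht => by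
    simpa [← smul_sum, hF] using HasDerivAt.fun_sum (u := univ) fun i _ => hv' i t ht
  have hmean : ∀ i, ∀ t ≥ (0:ℝ), v i t = vbar := fun i t ht => by
    have hcommon := inv_card_smul_sum_eq_of_forall_eq fun j => hsync t ht j i
    rw [Fintype.card_fin, eq_of_hasDerivAt_zero_of_nonneg hmomentum ht] at hcommon
    rw [hvbar, hcommon]
  intro i t ht
  refine ⟨hmean i t ht, ?_⟩
  have hzero := (hv' i t ht).eq_zero_of_forall_nonneg_eq (hmean i) ht
  have hN : (N : ℝ)⁻¹ ≠ 0 := inv_ne_zero (Nat.cast_ne_zero.mpr (Fin.pos i).ne')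
  exact (smul_eq_zero.mp (neg_eq_zero.mp hzero)).resolve_left hN

/-- If the dissipation vanishes for all `t ≥ 0`, the velocities are constant and equal to the
mean initial velocity, and the total interaction force on each particle vanishes. -/
theorem invariant_set_characterization (N d : ℕ) (hN : 2 ≤ N)
    (ψ : ℝ → ℝ) (hψ : ∀ s : ℝ, 0 < ψ s)
    (V : EuclideanSpace ℝ (Fin d) → ℝ) (hV : ContDiff ℝ 1 V)
    (hodd : ∀ y : EuclideanSpace ℝ (Fin d), gradient V y = -gradient V (-y))
    (r v : Fin N → ℝ → EuclideanSpace ℝ (Fin d))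
    (vbar : EuclideanSpace ℝ (Fin d))
    (hvbar : vbar = (N : ℝ)⁻¹ • ∑ j : Fin N, v j 0)
    (hr : ∀ i, ∀ t ≥ (0:ℝ), HasDerivAt (r i) (v i t - vbar) t)
    (hv : ∀ i, ∀ t ≥ (0:ℝ), HasDerivAt (v i)
      ((N : ℝ)⁻¹ • ∑ j : Fin N, ψ ‖r i t - r j t‖ • (v j t - v i t)
        - (N : ℝ)⁻¹ • ∑ j : Fin N, gradient V (r i t - r j t)) t)
    (hdiss : ∀ t ≥ (0:ℝ), ∑ i : Fin N, ∑ j : Fin N,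
      ψ ‖r i t - r j t‖ * ‖v i t - v j t‖ ^ 2 = 0) :
    ∀ i, ∀ t ≥ (0:ℝ),
      v i t = vbar ∧ ∑ j : Fin N, gradient V (r i t - r j t) = 0 :=
  invariant_set_characterization_general N d ψ hψ V hodd r v vbar hvbar hv hdiss
end

section
/- A continuously differentiable function C : ℝ^{Nd} × ℝ^{Nd} → ℝ is a Casimir function for the port-Hamiltonian system with structure matrix [[0, I],[-I, -Ψ(z)]] (i.e., (∂C/∂z)^T ([[0,I],[-I,0]] - [[0,0],[0,Ψ(z)]]) = 0 for all z) if and only if C is constant. -/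
/-! `J - R(z)` is onto for every state `z`: `(a, b)` is the image of `(-b - Ψ(z) a, a)`.
Hence a Casimir function has zero differential everywhere, and is therefore constant. -/

open Finset

/-- The position of particle `i` encoded in a flattened state vector. -/
noncomputable def particlePos (N d : ℕ) (r : EuclideanSpace ℝ (Fin N × Fin d)) (i : Fin N) :
    EuclideanSpace ℝ (Fin d) :=
  WithLp.toLp 2 (fun k => r (i, k))

/-- The action of the block alignment matrix `Ψ(z)` (built from positions `r`) on a vector `w`:
`(Ψ w)_i = (1/N) ∑_j ψ(|x_j - x_i|)(w_i - w_j)`, componentwise in `ℝ^d`. -/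
noncomputable def psiApply (N d : ℕ) (ψ : ℝ → ℝ)
    (r w : EuclideanSpace ℝ (Fin N × Fin d)) : EuclideanSpace ℝ (Fin N × Fin d) :=
  WithLp.toLp 2 (fun p : Fin N × Fin d => (N : ℝ)⁻¹ * ∑ j : Fin N,
    ψ ‖particlePos N d r j - particlePos N d r p.1‖ * (w (p.1, p.2) - w (j, p.2)))

theorem Function.surjective_snd_neg_fst_sub {G H : Type*} [AddCommGroup G] (f : H → G) :
    Function.Surjective fun w : G × H => (w.2, -w.1 - f w.2) :=
  fun v => ⟨(-v.2 - f v.1, v.1), by simp⟩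

theorem casimir_iff_constant_general (N d : ℕ) (ψ : ℝ → ℝ)
    (C : EuclideanSpace ℝ (Fin N × Fin d) × EuclideanSpace ℝ (Fin N × Fin d) → ℝ)
    (hC : ContDiff ℝ 1 C) :
    (∀ z w : EuclideanSpace ℝ (Fin N × Fin d) × EuclideanSpace ℝ (Fin N × Fin d),
        fderiv ℝ C z (w.2, -w.1 - psiApply N d ψ z.1 w.2) = 0) ↔
      ∃ γ : ℝ, ∀ z, C z = γ := by
  constructor
  · intro hCasimir
    have hfderiv : ∀ z, fderiv ℝ C z = 0 := fun z => ContinuousLinearMap.ext fun v => by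
      obtain ⟨w, rfl⟩ := Function.surjective_snd_neg_fst_sub (psiApply N d ψ z.1) v
      exact hCasimir z w
    exact ⟨C 0, fun z => is_const_of_fderiv_eq_zero (hC.differentiable one_ne_zero) hfderiv z 0⟩
  · rintro ⟨γ, hγ⟩ z w
    rw [show C = fun _ => γ from funext hγ, fderiv_fun_const]
    rfl

/-- A continuously differentiable `C` is a Casimir function of the port-Hamiltonian system
(with structure matrix `J - R`, `J = [[0,I],[-I,0]]`, `R = [[0,0],[0,Ψ(z)]]`), i.e. its
differential annihilates `(J - R)w` for every state `z` and direction `w`, if and only if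
`C` is constant. -/
theorem casimir_iff_constant (N d : ℕ) (hN : 2 ≤ N) (hd : 1 ≤ d)
    (ψ : ℝ → ℝ) (hψ : ∀ s, 0 ≤ ψ s)
    (C : EuclideanSpace ℝ (Fin N × Fin d) × EuclideanSpace ℝ (Fin N × Fin d) → ℝ)
    (hC : ContDiff ℝ 1 C) :
    (∀ z w : EuclideanSpace ℝ (Fin N × Fin d) × EuclideanSpace ℝ (Fin N × Fin d),
        fderiv ℝ C z (w.2, -w.1 - psiApply N d ψ z.1 w.2) = 0) ↔
      ∃ γ : ℝ, ∀ z, C z = γ :=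
  casimir_iff_constant_general N d ψ C hC
end
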